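/- arXiv:2006.05939 — 3 statements merged into one kernel-verified Lean document; each statement's English description precedes it below -/
import Mathlib

section
/- Let F : ℝ^d → ℝ be continuous and λ₀ ∈ ℝ such that the sub-level set Ω_F(λ) = {ξ : F(ξ) ≤ λ} is connected for all λ ≥ λ₀. Then every strict local minimum ξ* of F that is not a global minimum satisfies F(ξ*) ≤ λ₀. -/
/-! If `F ξ* > λ₀`, the sub-level set `{F ≤ F ξ*}` is preconnected, and being a strict local
minimum makes `ξ*` an isolated point of it. A preconnected set with an isolated point is that
point alone, so no point has a smaller value and `ξ*` is a global minimum. -/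

open Metric

theorem IsPreconnected.subset_singleton_of_inter_subset {X : Type*} [TopologicalSpace X]
    [T1Space X] {s U : Set X} {x : X} (hs : IsPreconnected s) (hU : IsOpen U)
    (hx : x ∈ s ∩ U) (hsU : s ∩ U ⊆ {x}) : s ⊆ {x} := by
  intro y hy
  by_contra hyx
  obtain ⟨z, hzs, hzU, hzx⟩ := hs U {x}ᶜ hU isOpen_compl_singleton
    (fun z _ => (em (z = x)).elim (fun h => .inl (h ▸ hx.2)) .inr) ⟨x, hx⟩ ⟨y, hy, hyx⟩
  exact hzx (hsU ⟨hzs, hzU⟩)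

theorem strict_local_min_le_of_connected_sublevels_above_general
    (d : ℕ) (F : EuclideanSpace ℝ (Fin d) → ℝ) (lam₀ : ℝ)
    (hconn : ∀ lam : ℝ, lam₀ ≤ lam →
      IsPreconnected {ξ : EuclideanSpace ℝ (Fin d) | F ξ ≤ lam})
    (ξstar : EuclideanSpace ℝ (Fin d))
    (hmin : ∃ ε > (0 : ℝ), ∀ ξ' : EuclideanSpace ℝ (Fin d),
      ξ' ≠ ξstar → ‖ξ' - ξstar‖ ≤ ε → F ξstar < F ξ')
    (hnotglob : ¬ ∀ ξ : EuclideanSpace ℝ (Fin d), F ξstar ≤ F ξ) :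
    F ξstar ≤ lam₀ := by
  by_contra! hlt
  obtain ⟨ε, hε, hloc⟩ := hmin
  obtain ⟨ξ₁, hξ₁⟩ := not_forall.1 hnotglob
  have hisolated : {ξ | F ξ ≤ F ξstar} ∩ ball ξstar ε ⊆ {ξstar} := by
    rintro ξ ⟨hξ, hξball⟩
    by_contra hne
    exact (hloc ξ hne (mem_ball_iff_norm.1 hξball).le).not_ge hξ
  have hsingleton := (hconn _ hlt.le).subset_singleton_of_inter_subset isOpen_ball
    ⟨le_refl (F ξstar), mem_ball_self hε⟩ hisolated
  have hξ₁_eq : ξ₁ = ξstar := hsingleton (le_of_not_ge hξ₁)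
  exact hξ₁ (hξ₁_eq ▸ le_rfl)

/-- If all sub-level sets `{ξ | F ξ ≤ λ}` with `λ ≥ λ₀` are connected, then every
strict local minimum of `F` that is not a global minimum has value at most `λ₀`. -/
theorem strict_local_min_le_of_connected_sublevels_above
    (d : ℕ) (F : EuclideanSpace ℝ (Fin d) → ℝ) (hF : Continuous F) (lam₀ : ℝ)
    (hconn : ∀ lam : ℝ, lam₀ ≤ lam →
      IsPreconnected {ξ : EuclideanSpace ℝ (Fin d) | F ξ ≤ lam})
    (ξstar : EuclideanSpace ℝ (Fin d))
    (hmin : ∃ ε > (0 : ℝ), ∀ ξ' : EuclideanSpace ℝ (Fin d),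
      ξ' ≠ ξstar → ‖ξ' - ξstar‖ ≤ ε → F ξstar < F ξ')
    (hnotglob : ¬ ∀ ξ : EuclideanSpace ℝ (Fin d), F ξstar ≤ F ξ) :
    F ξstar ≤ lam₀ :=
  strict_local_min_le_of_connected_sublevels_above_general d F lam₀ hconn ξstar hmin hnotglob
end

section
/- Let σ(x) = max(x, 0) applied coordinatewise (ReLU), and let w₁, w₂ ∈ ℝ^n with ‖w₁‖ = ‖w₂‖ = 1 and angle(w₁, w₂) ≤ α. Let X be a random vector in ℝ^n with second moment matrix Σ_X = E[X Xᵀ]. Then E[(σ(⟨w₁, X⟩) − σ(⟨w₂, X⟩))²] ≤ 4 ‖Σ_X‖ α², where ‖Σ_X‖ is the operator norm. -/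
open MeasureTheory InnerProductGeometry

/-!
ReLU is 1-Lipschitz, so the integrand is dominated by `⟨w₁ - w₂, X⟩²`, whose expectation is the
quadratic form `⟨v, Σ_X v⟩ ≤ ‖Σ_X‖ ‖v‖²` at `v = w₁ - w₂`. For unit vectors the chord `‖w₁ - w₂‖`
is at most the arc `angle w₁ w₂ ≤ α`, since `2 - 2 cos θ ≤ θ²`. This even gives the constant `1`.
-/

lemma sq_max_sub_max_le_sq_sub {R : Type*} [Ring R] [LinearOrder R] [IsStrictOrderedRing R]
    (a b c : R) : (max a c - max b c) ^ 2 ≤ (a - b) ^ 2 :=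
  sq_le_sq.2 (abs_max_sub_max_le_abs a b c)

lemma norm_sub_le_angle {V : Type*} [NormedAddCommGroup V] [InnerProductSpace ℝ V] {x y : V}
    (hx : ‖x‖ = 1) (hy : ‖y‖ = 1) : ‖x - y‖ ≤ angle x y := by
  have hcos : Real.cos (angle x y) = inner ℝ x y := by simp [cos_angle, hx, hy]
  have hchord : ‖x - y‖ ^ 2 = 2 - 2 * Real.cos (angle x y) := by
    rw [hcos, norm_sub_sq_real, hx, hy]; ring
  refine (pow_le_pow_iff_left₀ (norm_nonneg _) (angle_nonneg x y) two_ne_zero).1 ?_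
  linarith [Real.one_sub_sq_div_two_le_cos (x := angle x y)]

lemma ContinuousLinearMap.real_inner_apply_self_le {E : Type*} [NormedAddCommGroup E]
    [InnerProductSpace ℝ E] (A : E →L[ℝ] E) (v : E) : inner ℝ v (A v) ≤ ‖A‖ * ‖v‖ ^ 2 :=
  calc inner ℝ v (A v) ≤ ‖v‖ * ‖A v‖ := real_inner_le_norm v (A v)
    _ ≤ ‖v‖ * (‖A‖ * ‖v‖) := by gcongr; exact A.le_opNorm v
    _ = ‖A‖ * ‖v‖ ^ 2 := by ring

lemma integral_inner_sq_eq_inner_toEuclideanCLM {Ω ι : Type*} [MeasurableSpace Ω] [Fintype ι]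
    [DecidableEq ι] {μ : Measure Ω} {X : Ω → EuclideanSpace ℝ ι} (hX : MemLp X 2 μ)
    {S : Matrix ι ι ℝ} (hS : ∀ i j, S i j = ∫ ω, X ω i * X ω j ∂μ) (v : EuclideanSpace ℝ ι) :
    ∫ ω, inner ℝ v (X ω) ^ 2 ∂μ = inner ℝ v (Matrix.toEuclideanCLM (𝕜 := ℝ) S v) := by
  have hXi : ∀ i, MemLp (fun ω => X ω i) 2 μ := fun i =>
    (EuclideanSpace.proj (𝕜 := ℝ) i).comp_memLp' hX
  have hXX : ∀ i j, Integrable (fun ω => X ω i * X ω j) μ := fun i j =>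
    (hXi i).integrable_mul (hXi j)
  have hexpand : ∀ ω, inner ℝ v (X ω) ^ 2 = ∑ i, ∑ j, v i * v j * (X ω i * X ω j) := by
    intro ω
    simp only [PiLp.inner_apply, RCLike.inner_apply, conj_trivial, sq, Finset.sum_mul_sum]
    exact Finset.sum_congr rfl fun i _ => Finset.sum_congr rfl fun j _ => by ring
  simp_rw [hexpand]
  rw [integral_finsetSum _ fun i _ => integrable_finsetSum _ fun j _ => (hXX i j).const_mul _]
  simp_rw [integral_finsetSum _ fun j _ => (hXX _ j).const_mul _, integral_const_mul, ← hS,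
    Matrix.inner_toEuclideanCLM, dotProduct, Matrix.mulVec, dotProduct, Finset.mul_sum]
  exact Finset.sum_congr rfl fun i _ => Finset.sum_congr rfl fun j _ => by ring

/-- Perturbation lemma for ReLU units: if `w₁, w₂` are unit vectors at angle at most
`α`, then `E[(σ⟨w₁,X⟩ − σ⟨w₂,X⟩)²] ≤ 4 ‖Σ_X‖ α²`, where `Σ_X = E[X Xᵀ]` and `‖·‖`
is the operator norm. -/
theorem relu_perturbation_bound
    {Ω : Type*} [MeasureSpace Ω] (μ : Measure Ω) [IsProbabilityMeasure μ]
    (n : ℕ) (X : Ω → EuclideanSpace ℝ (Fin n))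
    (hXmeas : Measurable X) (C : ℝ) (hXbdd : ∀ ω, ‖X ω‖ ≤ C)
    (SigX : Matrix (Fin n) (Fin n) ℝ)
    (hSigX : ∀ i j, SigX i j = ∫ ω, X ω i * X ω j ∂μ)
    (w₁ w₂ : EuclideanSpace ℝ (Fin n)) (hw₁ : ‖w₁‖ = 1) (hw₂ : ‖w₂‖ = 1)
    (α : ℝ) (hangle : angle w₁ w₂ ≤ α) :
    ∫ ω, (max (inner ℝ w₁ (X ω)) 0 - max (inner ℝ w₂ (X ω)) (0:ℝ))^2 ∂μ ≤
      4 * ‖Matrix.toEuclideanCLM (𝕜 := ℝ) SigX‖ * α^2 := by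
  set A := Matrix.toEuclideanCLM (𝕜 := ℝ) SigX
  have hX : MemLp X 2 μ := .of_bound hXmeas.aestronglyMeasurable C (ae_of_all μ hXbdd)
  have hdom : Integrable (fun ω => inner ℝ (w₁ - w₂) (X ω) ^ 2) μ :=
    ((innerSL ℝ (w₁ - w₂)).comp_memLp' hX).integrable_sq
  have hchord : ‖w₁ - w₂‖ ^ 2 ≤ α ^ 2 :=
    pow_le_pow_left₀ (norm_nonneg _) ((norm_sub_le_angle hw₁ hw₂).trans hangle) 2
  calc ∫ ω, (max (inner ℝ w₁ (X ω)) 0 - max (inner ℝ w₂ (X ω)) (0:ℝ))^2 ∂μ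
      ≤ ∫ ω, inner ℝ (w₁ - w₂) (X ω) ^ 2 ∂μ := by
        refine integral_mono_of_nonneg (ae_of_all μ fun ω => sq_nonneg _) hdom
          (ae_of_all μ fun ω => ?_)
        simpa only [inner_sub_left] using sq_max_sub_max_le_sq_sub _ _ (0 : ℝ)
    _ = inner ℝ (w₁ - w₂) (A (w₁ - w₂)) :=
        integral_inner_sq_eq_inner_toEuclideanCLM hX hSigX _
    _ ≤ ‖A‖ * ‖w₁ - w₂‖ ^ 2 := A.real_inner_apply_self_le _
    _ ≤ 4 * ‖A‖ * α ^ 2 := by nlinarith [norm_nonneg A, sq_nonneg α]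
end

section
/- Consequence of the linear skip-connection theorem: under its hypotheses, every strict local minimum ξ* of F₁(W, V, θ) = E[L(W(x + V g(θ, x)), y)] satisfies F₁(ξ*) ≤ inf_W E[L(W x, y)], i.e., no strict local minimum is worse than the global minimum of the linear model. -/
open MeasureTheory Matrix

open Filter Topology

/-!
`F₁(W, V, θ)` depends on `(W, V)` only through the block matrix `[W, W V]`: it is the linear
model `G_θ(Z) = E[L(Z (x, g(θ, x)), y)]` evaluated at `Z = [W, W V]`. At a strict local minimum
`(W₀, V₀, θ₀)` the map `W₀` is injective, since otherwise moving `V` in a direction killed by `W₀`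
leaves `F₁` unchanged; as `d_y ≤ d_x`, `W₀` is then square and invertible. Near such a point
`(W, V) ↦ [W, W V]` has the continuous local inverse `Z ↦ (Z₁, Z₁⁻¹ Z₂)`, so `[W₀, W₀ V₀]` is a
strict local minimum of `G_θ₀`. A strict local minimum is isolated in its sublevel set, so when
that set is preconnected it is a global minimum; comparing with `Z = [W, 0]` gives the bound.
-/

def IsStrictLocalMin {X β : Type*} [TopologicalSpace X] [Preorder β] (f : X → β) (a : X) : Prop :=
  ∀ᶠ x in 𝓝[≠] a, f a < f x

namespace IsStrictLocalMin

variable {X Y β : Type*} [TopologicalSpace X] [TopologicalSpace Y]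

theorem comp [Preorder β] {f : X → β} {γ : Y → X} {b : Y} (h : IsStrictLocalMin f (γ b))
    (hγ : ContinuousAt γ b) (hγb : ∀ y ≠ b, γ y ≠ γ b) : IsStrictLocalMin (f ∘ γ) b :=
  (tendsto_nhdsWithin_of_tendsto_nhds_of_eventually_within _
    (hγ.tendsto.mono_left nhdsWithin_le_nhds) (eventually_nhdsWithin_of_forall hγb)).eventually h

theorem of_comp [Preorder β] {f : Y → β} {Φ : X → Y} {a : X} (h : IsStrictLocalMin (f ∘ Φ) a)
    (hΦ : 𝓝 (Φ a) ≤ map Φ (𝓝 a)) : IsStrictLocalMin f (Φ a) := by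
  rw [IsStrictLocalMin, eventually_nhdsWithin_iff] at h ⊢
  exact hΦ (h.mono fun x hx hne => hx (ne_of_apply_ne Φ hne))

theorem not_const [Preorder β] {a : X} [(𝓝[≠] a).NeBot] {c : β} :
    ¬ IsStrictLocalMin (fun _ : X => c) a := fun h =>
  h.exists.elim fun _ => lt_irrefl c

theorem le_of_isPreconnected [T1Space X] [LinearOrder β] {f : X → β} {a : X}
    (h : IsStrictLocalMin f a) (hS : IsPreconnected {z | f z ≤ f a}) (z : X) : f a ≤ f z := by
  by_contra! hz
  obtain ⟨O, hOmin, hO, haO⟩ := mem_nhds_iff.1 (eventually_nhdsWithin_iff.1 h)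
  obtain ⟨w, hwS, hwO, hwa⟩ := hS O {a}ᶜ hO isOpen_compl_singleton
    (fun w _ => by by_cases hw : w = a <;> simp [hw, haO]) ⟨a, le_rfl, haO⟩
    ⟨z, hz.le, fun hza => (hza ▸ hz).false⟩
  exact (hOmin hwO hwa).not_ge hwS

end IsStrictLocalMin

namespace Matrix

variable {𝕜 R m n p : Type*}

theorem exists_mul_eq_zero_of_not_injective_mulVec [Ring 𝕜] [Fintype n] [Nonempty p]
    {W : Matrix m n 𝕜} (hW : ¬ Function.Injective W.mulVec) :
    ∃ E : Matrix n p 𝕜, E ≠ 0 ∧ W * E = 0 := by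
  obtain ⟨u, v, huv, hne⟩ := Function.not_injective_iff.1 hW
  obtain ⟨i, hi⟩ := Function.ne_iff.1 (sub_ne_zero.2 hne)
  refine ⟨vecMulVec (u - v) 1, fun hE => hi ?_, ?_⟩
  · simpa using congr($hE i (Classical.arbitrary p))
  rw [mul_vecMulVec, mulVec_sub, huv, sub_self, zero_vecMulVec]

theorem card_le_card_of_injective_mulVec [Field 𝕜] [Fintype m] [Fintype n]
    {W : Matrix m n 𝕜} (hW : Function.Injective W.mulVec) : Fintype.card n ≤ Fintype.card m := by
  simpa using LinearMap.finrank_le_finrank_of_injective (f := W.mulVecLin) hW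

theorem continuous_toCols₁ [TopologicalSpace R] :
    Continuous fun Z : Matrix m (n ⊕ p) R => Z.toCols₁ :=
  continuous_matrix fun i j => continuous_id.matrix_elem i (Sum.inl j)

theorem continuous_toCols₂ [TopologicalSpace R] :
    Continuous fun Z : Matrix m (n ⊕ p) R => Z.toCols₂ :=
  continuous_matrix fun i j => continuous_id.matrix_elem i (Sum.inr j)

theorem nhds_fromCols_mul_le_map [NormedField 𝕜] [Fintype n] [DecidableEq n] [Fintype p]
    {W₀ : Matrix n n 𝕜} (hW₀ : IsUnit W₀.det) (V₀ : Matrix n p 𝕜) :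
    𝓝 (fromCols W₀ (W₀ * V₀)) ≤
      Filter.map (fun q : Matrix n n 𝕜 × Matrix n p 𝕜 => fromCols q.1 (q.1 * q.2))
        (𝓝 (W₀, V₀)) := by
  set Φ := fun q : Matrix n n 𝕜 × Matrix n p 𝕜 => fromCols q.1 (q.1 * q.2)
  set ψ := fun Z : Matrix n (n ⊕ p) 𝕜 => (Z.toCols₁, Z.toCols₁⁻¹ * Z.toCols₂)
  have hψ : Tendsto ψ (𝓝 (Φ (W₀, V₀))) (𝓝 (W₀, V₀)) := by
    have hinv : ContinuousAt Inv.inv W₀ := continuousAt_matrix_inv W₀ <| by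
      simpa [Ring.inverse_eq_inv'] using continuousAt_inv₀ hW₀.ne_zero
    have hinv₁ : ContinuousAt (fun Z : Matrix n (n ⊕ p) 𝕜 => Z.toCols₁⁻¹) (Φ (W₀, V₀)) :=
      hinv.comp_of_eq continuous_toCols₁.continuousAt (toCols₁_fromCols _ _)
    have hmul : ContinuousAt (fun Z : Matrix n (n ⊕ p) 𝕜 => Z.toCols₁⁻¹ * Z.toCols₂)
        (Φ (W₀, V₀)) :=
      have hc : Continuous fun q : Matrix n n 𝕜 × Matrix n p 𝕜 => q.1 * q.2 :=
        continuous_fst.matrix_mul continuous_snd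
      hc.continuousAt.comp (hinv₁.prodMk continuous_toCols₂.continuousAt)
    have hcont : ContinuousAt ψ (Φ (W₀, V₀)) := continuous_toCols₁.continuousAt.prodMk hmul
    simpa [ψ, Φ, nonsing_inv_mul_cancel_left W₀ V₀ hW₀] using hcont.tendsto
  have hΦψ : Φ ∘ ψ =ᶠ[𝓝 (Φ (W₀, V₀))] id := by
    have hdet : ∀ᶠ Z in 𝓝 (Φ (W₀, V₀)), (toCols₁ Z).det ≠ 0 :=
      continuous_toCols₁.matrix_det.continuousAt.eventually_ne <| by
        simpa [Φ] using hW₀.ne_zero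
    filter_upwards [hdet] with Z hZ
    simp [Φ, ψ, mul_nonsing_inv_cancel_left _ _ (isUnit_iff_ne_zero.2 hZ)]
  calc 𝓝 (Φ (W₀, V₀)) = Filter.map (Φ ∘ ψ) (𝓝 (Φ (W₀, V₀))) := by
        rw [map_congr hΦψ, Filter.map_id]
    _ = Filter.map Φ (Filter.map ψ (𝓝 (Φ (W₀, V₀)))) := Filter.map_map.symm
    _ ≤ Filter.map Φ (𝓝 (W₀, V₀)) := map_mono hψ

end Matrix

theorem IsStrictLocalMin.injective_mulVec {𝕜 m n p X β : Type*} [NontriviallyNormedField 𝕜]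
    [Fintype n] [Fintype p] [Nonempty p] [TopologicalSpace X] [Preorder β]
    {F : Matrix m n 𝕜 × Matrix n p 𝕜 × X → β}
    (hF : ∀ W V V' θ, W * V = W * V' → F (W, V, θ) = F (W, V', θ))
    {W₀ : Matrix m n 𝕜} {V₀ : Matrix n p 𝕜} {θ₀ : X} (h : IsStrictLocalMin F (W₀, V₀, θ₀)) :
    Function.Injective W₀.mulVec := by
  by_contra hW
  obtain ⟨E, hE, hWE⟩ := exists_mul_eq_zero_of_not_injective_mulVec (p := p) hW
  set γ := fun t : 𝕜 => (W₀, V₀ + t • E, θ₀)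
  have hγ0 : γ 0 = (W₀, V₀, θ₀) := by simp [γ]
  have hγ : ContinuousAt γ 0 := by fun_prop
  have hγne : ∀ t ≠ 0, γ t ≠ γ 0 := by simp [γ, hE]
  have hconst : F ∘ γ = fun _ => F (W₀, V₀, θ₀) :=
    funext fun t => hF _ _ _ _ <| by
      rw [Matrix.mul_add, Matrix.mul_smul, hWE, smul_zero, add_zero]
  rw [← hγ0] at h
  exact IsStrictLocalMin.not_const (hconst ▸ h.comp hγ hγne)

theorem linear_skip_connection_local_min_general
    {Ω : Type*} [MeasureSpace Ω] (μ : Measure Ω)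
    (dx dy dz : ℕ) (hyx : dy ≤ dx) (hyz : dy ≤ dz)
    {Θ : Type*} [TopologicalSpace Θ]
    (x : Ω → Fin dx → ℝ) (y : Ω → Fin dy → ℝ)
    (L : (Fin dy → ℝ) → (Fin dy → ℝ) → ℝ)
    (g : Θ → (Fin dx → ℝ) → (Fin dz → ℝ))
    (hconn : ∀ (xt : Ω → Fin dx ⊕ Fin dz → ℝ) (lam : ℝ),
      IsPreconnected {Z : Matrix (Fin dy) (Fin dx ⊕ Fin dz) ℝ |
        ∫ ω, L (Z.mulVec (xt ω)) (y ω) ∂μ ≤ lam})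
    (F₁ : Matrix (Fin dy) (Fin dx) ℝ × Matrix (Fin dx) (Fin dz) ℝ × Θ → ℝ)
    (hF₁ : ∀ W V θ, F₁ (W, V, θ) =
      ∫ ω, L (W.mulVec (x ω + V.mulVec (g θ (x ω)))) (y ω) ∂μ)
    (ξstar : Matrix (Fin dy) (Fin dx) ℝ × Matrix (Fin dx) (Fin dz) ℝ × Θ)
    (hmin : ∃ U ∈ nhds ξstar, ∀ ξ ∈ U, ξ ≠ ξstar → F₁ ξstar < F₁ ξ) :
    F₁ ξstar ≤ ⨅ W : Matrix (Fin dy) (Fin dx) ℝ,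
      ∫ ω, L (W.mulVec (x ω)) (y ω) ∂μ := by
  obtain ⟨W₀, V₀, θ₀⟩ := ξstar
  set G : Θ → Matrix (Fin dy) (Fin dx ⊕ Fin dz) ℝ → ℝ := fun θ Z =>
    ∫ ω, L (Z *ᵥ Sum.elim (x ω) (g θ (x ω))) (y ω) ∂μ
  have hFG : ∀ W V θ, F₁ (W, V, θ) = G θ (fromCols W (W * V)) := fun W V θ => by
    simp only [hF₁, G, fromCols_mulVec_sumElim, mulVec_add, mulVec_mulVec]
  have hlin : ∀ W, G θ₀ (fromCols W 0) = ∫ ω, L (W *ᵥ x ω) (y ω) ∂μ := fun W => by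
    simp only [G, fromCols_mulVec_sumElim, zero_mulVec, add_zero]
  have hstrict : IsStrictLocalMin F₁ (W₀, V₀, θ₀) := by
    obtain ⟨U, hU, hUmin⟩ := hmin
    exact eventually_nhdsWithin_iff.2 (Filter.mem_of_superset hU hUmin)
  rcases isEmpty_or_nonempty (Fin dy) with _ | _
  · -- all vectors in `Fin dy → ℝ` coincide, so both integrands are the same
    refine le_ciInf fun W => (hF₁ W₀ V₀ θ₀).trans_le (le_of_eq ?_)
    congr! 3
  have : Nonempty (Fin dz) := ⟨Fin.castLE hyz (Classical.arbitrary _)⟩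
  have hinj := hstrict.injective_mulVec fun W V V' θ hV => by rw [hFG, hFG, hV]
  obtain rfl : dx = dy := le_antisymm (by simpa using card_le_card_of_injective_mulVec hinj) hyx
  have hW₀ : IsUnit W₀.det := (isUnit_iff_isUnit_det _).1 (mulVec_injective_iff_isUnit.1 hinj)
  let γ : Matrix (Fin dx) (Fin dx) ℝ × Matrix (Fin dx) (Fin dz) ℝ → _ := fun q => (q.1, q.2, θ₀)
  have hslice : IsStrictLocalMin (G θ₀ ∘ fun q => fromCols q.1 (q.1 * q.2)) (W₀, V₀) := by
    rw [show G θ₀ ∘ _ = F₁ ∘ γ from funext fun q => (hFG q.1 q.2 θ₀).symm]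
    exact hstrict.comp (γ := γ) (b := (W₀, V₀)) (by fun_prop) fun q hq hq' =>
      hq (by simpa [γ, Prod.ext_iff] using hq')
  have hG := hslice.of_comp (nhds_fromCols_mul_le_map hW₀ V₀)
  rw [hFG]
  exact le_ciInf fun W => hlin W ▸ hG.le_of_isPreconnected (hconn _ _) _

/-- Consequence of the linear skip-connection theorem: under its hypotheses, every
strict local minimum of `F₁(W, V, θ) = E[L(W(x + V g(θ, x)), y)]` has value at most
`inf_W E[L(W x, y)]`, the global minimum value of the linear model. -/
theorem linear_skip_connection_local_min
    {Ω : Type*} [MeasureSpace Ω] (μ : Measure Ω) [IsProbabilityMeasure μ]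
    (dx dy dz : ℕ) (hyx : dy ≤ dx) (hyz : dy ≤ dz)
    {Θ : Type*} [TopologicalSpace Θ]
    (x : Ω → Fin dx → ℝ) (y : Ω → Fin dy → ℝ)
    (hx : Measurable x) (hy : Measurable y)
    (Cx Cy : ℝ) (hxb : ∀ ω i, |x ω i| ≤ Cx) (hyb : ∀ ω i, |y ω i| ≤ Cy)
    (L : (Fin dy → ℝ) → (Fin dy → ℝ) → ℝ) (hL : Continuous fun p : _ × _ => L p.1 p.2)
    (hLconv : ∀ yv, ConvexOn ℝ Set.univ fun w => L w yv)
    (g : Θ → (Fin dx → ℝ) → (Fin dz → ℝ))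
    (hg : Continuous fun p : Θ × (Fin dx → ℝ) => g p.1 p.2)
    (hconn : ∀ (xt : Ω → Fin dx ⊕ Fin dz → ℝ) (lam : ℝ),
      IsPreconnected {Z : Matrix (Fin dy) (Fin dx ⊕ Fin dz) ℝ |
        ∫ ω, L (Z.mulVec (xt ω)) (y ω) ∂μ ≤ lam})
    (F₁ : Matrix (Fin dy) (Fin dx) ℝ × Matrix (Fin dx) (Fin dz) ℝ × Θ → ℝ)
    (hF₁ : ∀ W V θ, F₁ (W, V, θ) =
      ∫ ω, L (W.mulVec (x ω + V.mulVec (g θ (x ω)))) (y ω) ∂μ)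
    (ξstar : Matrix (Fin dy) (Fin dx) ℝ × Matrix (Fin dx) (Fin dz) ℝ × Θ)
    (hmin : ∃ U ∈ nhds ξstar, ∀ ξ ∈ U, ξ ≠ ξstar → F₁ ξstar < F₁ ξ) :
    F₁ ξstar ≤ ⨅ W : Matrix (Fin dy) (Fin dx) ℝ,
      ∫ ω, L (W.mulVec (x ω)) (y ω) ∂μ :=
  linear_skip_connection_local_min_general μ dx dy dz hyx hyz x y L g hconn F₁ hF₁ ξstar hmin
end
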